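/- arXiv:1303.1657 — 2 statements merged into one kernel-verified Lean document; each statement's English description precedes it below -/
import Mathlib

section
/- Let A be a finite connected subset of Z^d and let A-bar be the union of A with all its holes. Then Π(A-bar) equals the set of all plaquettes dual to edges having exactly one endvertex in A-bar. -/
open Set Relation Filter

/-- Vertices of the lattice `ℤ^d`. -/
abbrev V (d : ℕ) := Fin d → ℤ

/-- Nearest-neighbour adjacency in `ℤ^d`: `x` and `y` differ by `1` in exactly
one coordinate. -/
def latAdj {d : ℕ} (x y : V d) : Prop :=
  ∃ i, (x i - y i).natAbs = 1 ∧ ∀ j, j ≠ i → x j = y j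

/-- Connectivity in the complement of `S` (paths avoiding `S`). -/
def connAvoid {d : ℕ} (S : Set (V d)) (a b : V d) : Prop :=
  ReflTransGen (fun u v => latAdj u v ∧ u ∉ S ∧ v ∉ S) a b

/-- The connected component of `w` in the complement of `S`. -/
def compOff {d : ℕ} (S : Set (V d)) (w : V d) : Set (V d) :=
  {z | connAvoid S w z}

/-- `y` lies outside `S` and is joined to infinity off `S` (its component in
the complement of `S` is infinite). -/
def toInfOff {d : ℕ} (S : Set (V d)) (y : V d) : Prop :=
  y ∉ S ∧ (compOff S y).Infinite

/-- `S ⊆ ℤ^d` is connected (as an induced subgraph of the lattice). -/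
def IsLatConnected {d : ℕ} (S : Set (V d)) : Prop :=
  ∀ a ∈ S, ∀ b ∈ S, ReflTransGen (fun u v => latAdj u v ∧ u ∈ S ∧ v ∈ S) a b

/-- `S` together with all its holes (the finite components of its complement). -/
def fillHoles {d : ℕ} (S : Set (V d)) : Set (V d) :=
  S ∪ {w | w ∉ S ∧ (compOff S w).Finite}

/-- We identify a plaquette with its dual edge, realized as an unordered pair of
adjacent lattice points.  `PiS S` is the set of plaquettes dual to edges
`⟨x,y⟩` with `x ∈ S` and `y ∉ S` joined to infinity off `S`. -/
def PiS {d : ℕ} (S : Set (V d)) : Set (Sym2 (V d)) :=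
  {e | ∃ x y, latAdj x y ∧ x ∈ S ∧ toInfOff S y ∧ e = s(x, y)}

/-- The `i`-th unit coordinate vector. -/
def uv {d : ℕ} (i : Fin d) : V d := fun k => if k = i then 1 else 0

/-- A unit square (2-facet) of `ℤ^d`; its dual is a `(d-2)`-facet of the dual
lattice `ℤ^d + (1/2,…,1/2)`. -/
structure Square (d : ℕ) where
  corner : V d
  i : Fin d
  j : Fin d
  hij : i ≠ j

/-- The four edges of a unit square.  A plaquette (identified with its dual
edge `e`) is incident to the `(d-2)`-facet dual to the square `F` exactly when
`e` is one of the four edges of `F`. -/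
def edgesOf {d : ℕ} (F : Square d) : Set (Sym2 (V d)) :=
  {s(F.corner, F.corner + uv F.i), s(F.corner, F.corner + uv F.j),
   s(F.corner + uv F.i, F.corner + uv F.i + uv F.j),
   s(F.corner + uv F.j, F.corner + uv F.i + uv F.j)}

/-- A set of plaquettes has empty boundary if every `(d-2)`-facet of the dual
lattice is incident to an even number of its members. -/
def NoBoundary {d : ℕ} (P : Set (Sym2 (V d))) : Prop :=
  ∀ F : Square d, Even (edgesOf F ∩ P).ncard

/-- Two plaquettes are adjacent if their intersection is a `(d-2)`-facet,
equivalently their dual edges are distinct edges of a common unit square. -/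
def plaqAdj {d : ℕ} (e₁ e₂ : Sym2 (V d)) : Prop :=
  e₁ ≠ e₂ ∧ ∃ F : Square d, e₁ ∈ edgesOf F ∧ e₂ ∈ edgesOf F

/-- A set of plaquettes is connected for the adjacency relation `plaqAdj`. -/
def PlaqConnected {d : ℕ} (P : Set (Sym2 (V d))) : Prop :=
  ∀ a ∈ P, ∀ b ∈ P, ReflTransGen (fun u v => plaqAdj u v ∧ u ∈ P ∧ v ∈ P) a b

/-! A vertex outside `Ā` lies in an infinite component of the complement of `A`. Every vertex of
that component has the same (infinite) component, so none of them lies in `Ā`: the component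
survives unchanged in the complement of `Ā` and is still infinite. -/

section FillHoles

variable {d : ℕ} {S : Set (V d)} {w y z : V d}

lemma latAdj.symm (h : latAdj y z) : latAdj z y := by
  obtain ⟨i, hi, hj⟩ := h
  exact ⟨i, by omega, fun j hji => (hj j hji).symm⟩

lemma connAvoid.symm (h : connAvoid S y z) : connAvoid S z y := by
  induction h with
  | refl => exact ReflTransGen.refl
  | tail _ huv ih => exact ih.head ⟨huv.1.symm, huv.2.2, huv.2.1⟩

lemma compOff_eq_of_connAvoid (h : connAvoid S w z) : compOff S z = compOff S w :=
  Set.ext fun _ => ⟨h.trans, h.symm.trans⟩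

lemma notMem_fillHoles_iff : y ∉ fillHoles S ↔ toInfOff S y := by
  simp only [fillHoles, toInfOff, Set.mem_union, Set.mem_ofPred_eq]
  tauto

lemma toInfOff.of_connAvoid (hy : toInfOff S y) (h : connAvoid S y z) (hz : z ∉ S) :
    toInfOff S z :=
  ⟨hz, compOff_eq_of_connAvoid h ▸ hy.2⟩

lemma toInfOff.connAvoid_fillHoles (hy : toInfOff S y) (h : connAvoid S y z) :
    connAvoid (fillHoles S) y z := by
  induction h with
  | refl => exact ReflTransGen.refl
  | tail hyu huv ih =>
    exact ih.tail ⟨huv.1, notMem_fillHoles_iff.2 (hy.of_connAvoid hyu huv.2.1),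
      notMem_fillHoles_iff.2 (hy.of_connAvoid (hyu.tail huv) huv.2.2)⟩

lemma toInfOff_fillHoles_iff : toInfOff (fillHoles S) y ↔ y ∉ fillHoles S := by
  refine ⟨And.left, fun hy => ⟨hy, ?_⟩⟩
  have hyS := notMem_fillHoles_iff.1 hy
  exact hyS.2.mono fun _ => hyS.connAvoid_fillHoles

end FillHoles

theorem PiS_fillHoles_eq_all_boundary_edges_general (d : ℕ) (A : Set (V d)) :
    PiS (fillHoles A) =
      {e | ∃ x y, latAdj x y ∧ x ∈ fillHoles A ∧ y ∉ fillHoles A ∧ e = s(x, y)} := by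
  simp only [PiS, toInfOff_fillHoles_iff]

/-- For a finite connected `A ⊆ ℤ^d`, the plaquette set `Π(A-bar)` of the
filled set equals the set of all plaquettes dual to edges having exactly one
endvertex in `A-bar`. -/
theorem PiS_fillHoles_eq_all_boundary_edges (d : ℕ) (hd : 2 ≤ d) (A : Set (V d))
    (hfin : A.Finite) (hconn : IsLatConnected A) :
    PiS (fillHoles A) =
      {e | ∃ x y, latAdj x y ∧ x ∈ fillHoles A ∧ y ∉ fillHoles A ∧ e = s(x, y)} :=
  PiS_fillHoles_eq_all_boundary_edges_general d A
end

section
/- The event that the union X of finite open clusters of bond percolation on Z^d contains an infinite connected component has probability 0 or 1, and its probability is non-increasing in p; hence there exists p_fin ∈ [0,1] such that this event has probability 1 for p < p_fin and probability 0 for p > p_fin. -/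
open Set Relation Filter

open MeasureTheory

/-- The standard monotone coupling: each edge carries an independent
Uniform[0,1] variable, and an edge `e` is open at level `p` iff `U_e ≤ p`. -/
abbrev UConfig (d : ℕ) := Sym2 (V d) → ℝ

/-- `e` is an edge of the lattice `ℤ^d`. -/
def IsEdge {d : ℕ} (e : Sym2 (V d)) : Prop :=
  ∃ x y, latAdj x y ∧ e = s(x, y)

/-- `x` and `y` are joined by a `p`-open path in the coupling. -/
def openConnU {d : ℕ} (u : UConfig d) (p : ℝ) (x y : V d) : Prop :=
  ReflTransGen (fun a b => latAdj a b ∧ u s(a, b) ≤ p) x y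

/-- `x` lies in an infinite `p`-open cluster. -/
def inInfClusterU {d : ℕ} (u : UConfig d) (p : ℝ) (x : V d) : Prop :=
  {y | openConnU u p x y}.Infinite

/-- The set `X` at level `p`: vertices in no infinite `p`-open cluster. -/
def XsetU {d : ℕ} (u : UConfig d) (p : ℝ) : Set (V d) :=
  {x | ¬ inInfClusterU u p x}

/-- The event that `X` at level `p` has an infinite connected component. -/
def XhasInfU {d : ℕ} (u : UConfig d) (p : ℝ) : Prop :=
  ∃ x ∈ XsetU u p,
    {y | ReflTransGen (fun a b => latAdj a b ∧ a ∈ XsetU u p ∧ b ∈ XsetU u p) x y}.Infinite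

/-- `P` is the product of i.i.d. Uniform[0,1] edge variables. -/
def IsUniformProduct {d : ℕ} (P : Measure (UConfig d)) : Prop :=
  ∀ s : Finset (Sym2 (V d)), (∀ e ∈ s, IsEdge e) →
    ∀ a : Sym2 (V d) → ℝ, (∀ e ∈ s, a e ∈ Set.Icc (0 : ℝ) 1) →
      P {u | ∀ e ∈ s, u e ≤ a e} = ∏ e ∈ s, ENNReal.ofReal (a e)

/-!
Changing finitely many edge variables changes `X` at only finitely many vertices: a vertex
whose open cluster switches between finite and infinite must reach, inside its finite cluster,
an endpoint of a changed edge. In a locally finite graph, deleting finitely many vertices from a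
set with an infinite component leaves an infinite component. So the event is a tail event of
the independent edge variables, and Kolmogorov's 0-1 law applies. Since `X` shrinks as `p`
grows, the probability is non-increasing, and `p_fin` is the supremum of the levels where it
equals `1`.
-/

section Measurability

variable {Ω γ : Type*} {mΩ : MeasurableSpace Ω}

lemma measurableSet_isChain_cons (r : Ω → γ → γ → Prop)
    (hr : ∀ a b, MeasurableSet {ω | r ω a b}) (a : γ) (l : List γ) :
    MeasurableSet {ω | List.IsChain (r ω) (a :: l)} := by
  induction l generalizing a with
  | nil => simp
  | cons b l ih =>
    simp only [List.isChain_cons_cons, ofPred_and]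
    exact (hr a b).inter (ih b)

lemma measurableSet_reflTransGen [Countable γ] (r : Ω → γ → γ → Prop)
    (hr : ∀ a b, MeasurableSet {ω | r ω a b}) (a b : γ) :
    MeasurableSet {ω | ReflTransGen (r ω) a b} := by
  have hchain : {ω | ReflTransGen (r ω) a b} =
      ⋃ l : List γ, {ω | List.IsChain (r ω) (a :: l) ∧ (a :: l).getLast (by simp) = b} := by
    ext ω
    simp only [mem_iUnion, mem_ofPred_eq]
    exact ⟨List.exists_isChain_cons_of_relationReflTransGen,
      fun ⟨l, hl, hlast⟩ => List.relationReflTransGen_of_exists_isChain_cons l hl hlast⟩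
  rw [hchain]
  refine .iUnion fun l => ?_
  simp only [ofPred_and]
  exact (measurableSet_isChain_cons r hr a l).inter (.const _)

lemma measurableSet_setOf_infinite [Countable γ] (S : Ω → Set γ)
    (hS : ∀ y, MeasurableSet {ω | y ∈ S ω}) :
    MeasurableSet {ω | (S ω).Infinite} := by
  have h : {ω | (S ω).Infinite} = ⋂ F : Finset γ, ⋃ y ∉ F, {ω | y ∈ S ω} := by
    ext ω
    simp only [mem_ofPred_eq, mem_iInter, mem_iUnion, exists_prop]
    refine ⟨fun hinf F => ?_, fun h hfin => ?_⟩
    · obtain ⟨y, hy, hyF⟩ := hinf.exists_notMem_finset F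
      exact ⟨y, hyF, hy⟩
    · obtain ⟨y, hyF, hy⟩ := h hfin.toFinset
      exact hyF (hfin.mem_toFinset.2 hy)
  rw [h]
  exact .iInter fun F => .biUnion (to_countable _) fun y _ => hS y

end Measurability

section InfiniteComponent

variable {α : Type*}

def inducedRel (r : α → α → Prop) (X : Set α) (a b : α) : Prop :=
  r a b ∧ a ∈ X ∧ b ∈ X

def HasInfiniteComponent (r : α → α → Prop) (X : Set α) : Prop :=
  ∃ x ∈ X, {y | ReflTransGen (inducedRel r X) x y}.Infinite

variable {r : α → α → Prop}

lemma measurableSet_hasInfiniteComponent {Ω : Type*} {mΩ : MeasurableSpace Ω} [Countable α]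
    (X : Ω → Set α) (hX : ∀ x, MeasurableSet {ω | x ∈ X ω}) :
    MeasurableSet {ω | HasInfiniteComponent r (X ω)} := by
  have hrel : ∀ a b, MeasurableSet {ω | inducedRel r (X ω) a b} := fun a b => by
    simpa only [inducedRel, ofPred_and] using (MeasurableSet.const _).inter ((hX a).inter (hX b))
  simp only [HasInfiniteComponent, ofPred_exists, ofPred_and]
  exact .iUnion fun x => (hX x).inter
    (measurableSet_setOf_infinite _ fun y => measurableSet_reflTransGen _ hrel x y)

lemma HasInfiniteComponent.mono {X Y : Set α} (hXY : X ⊆ Y) (h : HasInfiniteComponent r X) :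
    HasInfiniteComponent r Y := by
  obtain ⟨x, hx, hinf⟩ := h
  exact ⟨x, hXY hx, hinf.mono fun y =>
    ReflTransGen.mono (fun a b hab => ⟨hab.1, hXY hab.2.1, hXY hab.2.2⟩) x y⟩

lemma mem_of_infinite_reflTransGen_inducedRel {X : Set α} {x : α}
    (h : {y | ReflTransGen (inducedRel r X) x y}.Infinite) : x ∈ X := by
  obtain ⟨y, hy, hyx⟩ := h.exists_notMem_finite (finite_singleton x)
  rcases hy.cases_head with rfl | ⟨c, hc, -⟩
  exacts [absurd rfl hyx, hc.2.1]

lemma HasInfiniteComponent.diff_finite (hr : ∀ a, {b | r a b}.Finite) {X A : Set α}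
    (hA : A.Finite) (h : HasInfiniteComponent r X) : HasInfiniteComponent r (X \ A) := by
  obtain ⟨x, -, hC⟩ := h
  set T := insert x (⋃ a ∈ A, {b | r a b})
  have hT : T.Finite := (hA.biUnion fun a _ => hr a).insert x
  -- cut a path from `x` at its last visit to `A`
  have hcover : {y | ReflTransGen (inducedRel r X) x y} \ A ⊆
      ⋃ w ∈ T, {y | ReflTransGen (inducedRel r (X \ A)) w y} := by
    rintro z ⟨hz, hzA⟩
    induction hz with
    | refl => exact mem_biUnion (mem_insert x _) .refl
    | @tail b c _ hbc ih =>
      by_cases hbA : b ∈ A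
      · exact mem_biUnion (mem_insert_of_mem _ (mem_biUnion hbA hbc.1)) .refl
      · obtain ⟨w, hw, hwb⟩ := mem_iUnion₂.1 (ih hbA)
        exact mem_iUnion₂.2 ⟨w, hw, hwb.tail ⟨hbc.1, ⟨hbc.2.1, hbA⟩, ⟨hbc.2.2, hzA⟩⟩⟩
  obtain ⟨w, -, hw⟩ : ∃ w ∈ T, {y | ReflTransGen (inducedRel r (X \ A)) w y}.Infinite := by
    by_contra! hfin
    exact (hC.sdiff hA) ((hT.biUnion hfin).subset hcover)
  exact ⟨w, mem_of_infinite_reflTransGen_inducedRel hw, hw⟩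

lemma HasInfiniteComponent.of_diff_finite (hr : ∀ a, {b | r a b}.Finite) {X Y : Set α}
    (hXY : (X \ Y).Finite) (h : HasInfiniteComponent r X) : HasInfiniteComponent r Y :=
  (h.diff_finite hr hXY).mono (sdiff_sdiff_right_self X Y ▸ inter_subset_right)

end InfiniteComponent

section Clusters

variable {α : Type*} {R R' : α → α → Prop}

lemma Relation.ReflTransGen.exists_exit_of_not {x y : α} (h : ReflTransGen R' x y)
    (hxy : ¬ ReflTransGen R x y) : ∃ a b, ReflTransGen R x a ∧ R' a b ∧ ¬ R a b := by
  induction h with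
  | refl => exact absurd .refl hxy
  | @tail b c _ hbc ih =>
    by_cases hxb : ReflTransGen R x b
    · exact ⟨b, c, hxb, hbc, fun h => hxy (hxb.tail h)⟩
    · exact ih hxb

lemma finite_setOf_finite_and_infinite [Std.Symm R]
    (hD : {a | ∃ b, R' a b ∧ ¬ R a b}.Finite) :
    {x | {y | ReflTransGen R x y}.Finite ∧ {y | ReflTransGen R' x y}.Infinite}.Finite := by
  refine ((hD.inter_of_left {a | {y | ReflTransGen R a y}.Finite}).biUnion
    fun a ha => ha.2).subset ?_
  rintro x ⟨hfin, hinf⟩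
  obtain ⟨y, hy, hxy⟩ := (hinf.sdiff hfin).nonempty
  obtain ⟨a, b, hxa, hab, hnab⟩ := hy.exists_exit_of_not hxy
  exact mem_biUnion ⟨⟨b, hab, hnab⟩, hfin.subset fun z hz => hxa.trans hz⟩
    (Std.Symm.symm _ _ hxa)

end Clusters

section Lattice

variable {d : ℕ}

lemma latAdj_symm {x y : V d} (h : latAdj x y) : latAdj y x := by
  obtain ⟨i, hi, hne⟩ := h
  exact ⟨i, by rwa [← Int.natAbs_neg, neg_sub], fun j hj => (hne j hj).symm⟩

lemma finite_setOf_latAdj (x : V d) : {y | latAdj x y}.Finite := by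
  refine ((finite_range fun i => Function.update x i (x i - 1)).union
    (finite_range fun i => Function.update x i (x i + 1))).subset ?_
  rintro y ⟨i, hi, hne⟩
  have hy : ∀ c, y i = x i + c → y = Function.update x i (x i + c) := fun c hc => by
    funext j
    by_cases hj : j = i
    · subst hj; simp [hc]
    · simp [Function.update_of_ne hj, hne j hj]
  rcases Int.natAbs_eq_iff.1 hi with h | h
  · exact Or.inl ⟨i, by rw [hy (-1) (by omega), ← sub_eq_add_neg]⟩
  · exact Or.inr ⟨i, (hy 1 (by omega)).symm⟩

def openEdge (u : UConfig d) (p : ℝ) (a b : V d) : Prop :=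
  latAdj a b ∧ u s(a, b) ≤ p

instance (u : UConfig d) (p : ℝ) : Std.Symm (openEdge u p) :=
  ⟨fun _ _ h => ⟨latAdj_symm h.1, Sym2.eq_swap ▸ h.2⟩⟩

lemma XhasInfU_iff_hasInfiniteComponent {u : UConfig d} {p : ℝ} :
    XhasInfU u p ↔ HasInfiniteComponent latAdj (XsetU u p) :=
  Iff.rfl

lemma measurableSet_XhasInfU {m : MeasurableSpace (UConfig d)} {p : ℝ}
    (h : ∀ e, MeasurableSet[m] {u | u e ≤ p}) : MeasurableSet[m] {u | XhasInfU u p} := by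
  simp only [XhasInfU_iff_hasInfiniteComponent]
  refine measurableSet_hasInfiniteComponent _ fun x =>
    (measurableSet_setOf_infinite _ fun y => measurableSet_reflTransGen _ (fun a b => ?_) x y).compl
  simpa only [ofPred_and] using (MeasurableSet.const _).inter (h _)

lemma XsetU_anti (u : UConfig d) {p q : ℝ} (hpq : p ≤ q) : XsetU u q ⊆ XsetU u p :=
  fun _ hx hinf => hx (hinf.mono fun _ =>
    ReflTransGen.mono (fun _ _ hab => ⟨hab.1, hab.2.trans hpq⟩) _ _)

lemma XhasInfU.anti {u : UConfig d} {p q : ℝ} (hpq : p ≤ q) (h : XhasInfU u q) :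
    XhasInfU u p :=
  HasInfiniteComponent.mono (XsetU_anti u hpq) h

lemma XsetU_diff_finite {u v : UConfig d} (p : ℝ)
    (hfin : {e | IsEdge e ∧ u e ≠ v e}.Finite) : (XsetU u p \ XsetU v p).Finite := by
  classical
  refine (finite_setOf_finite_and_infinite (R := openEdge u p) (R' := openEdge v p) ?_).subset
    fun x ⟨hx, hx'⟩ => ⟨not_infinite.1 hx, not_not.1 hx'⟩
  refine (hfin.biUnion fun e _ => e.toFinset.finite_toSet).subset ?_
  rintro a ⟨b, ⟨hab, hv⟩, hu⟩
  exact mem_biUnion ⟨⟨a, b, hab, rfl⟩, fun h => hu ⟨hab, h ▸ hv⟩⟩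
    (Sym2.mem_toFinset.2 (Sym2.mem_mk_left a b))

lemma XhasInfU.of_finite_ne {u v : UConfig d} {p : ℝ}
    (hfin : {e | IsEdge e ∧ u e ≠ v e}.Finite) (h : XhasInfU u p) : XhasInfU v p :=
  HasInfiniteComponent.of_diff_finite finite_setOf_latAdj (XsetU_diff_finite p hfin) h

end Lattice

lemma measurableSet_biSup_comap_of_eqOn {ι β : Type*} [Nonempty β] (m : MeasurableSpace β)
    (s : Set ι) {E : Set (ι → β)} (hE : MeasurableSet[⨆ i, m.comap fun u => u i] E)
    (hinv : ∀ u v, EqOn u v s → u ∈ E → v ∈ E) :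
    MeasurableSet[⨆ i ∈ s, m.comap fun u => u i] E := by
  classical
  let c : ι → β := fun _ => Classical.arbitrary β
  -- `u ↦ s.piecewise u c` only reads the coordinates in `s`, and `E` is its own preimage
  have hpre : (fun u => s.piecewise u c) ⁻¹' E = E := by
    ext u
    exact ⟨hinv _ _ (piecewise_eqOn s u c), hinv _ _ (piecewise_eqOn s u c).symm⟩
  have hle : (⨆ i, m.comap fun u => u i).comap (fun u => s.piecewise u c) ≤
      ⨆ i ∈ s, m.comap fun u => u i := by
    rw [MeasurableSpace.comap_iSup]
    refine iSup_le fun i => ?_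
    rw [MeasurableSpace.comap_comp]
    by_cases hi : i ∈ s
    · have hcoord : (fun u : ι → β => u i) ∘ (fun u => s.piecewise u c) = fun u => u i :=
        funext fun u => piecewise_eq_of_mem s u c hi
      rw [hcoord]
      exact le_iSup₂ (f := fun i _ => m.comap fun u : ι → β => u i) i hi
    · have hcoord : (fun u : ι → β => u i) ∘ (fun u => s.piecewise u c) = fun _ => c i :=
        funext fun u => piecewise_eq_of_notMem s u c hi
      rw [hcoord, MeasurableSpace.comap_const]
      exact bot_le
  rw [← hpre]
  exact hle _ ⟨E, hE, rfl⟩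

lemma IsLowerSet.exists_threshold_Icc {S : Set ℝ} (hS : IsLowerSet S) :
    ∃ c ∈ Icc (0 : ℝ) 1, ∀ p ∈ Icc (0 : ℝ) 1, (p < c → p ∈ S) ∧ (c < p → p ∉ S) := by
  set T := insert 0 (S ∩ Icc 0 1)
  have hT1 : ∀ q ∈ T, q ≤ 1 := by
    rintro q (rfl | ⟨-, hq⟩)
    exacts [zero_le_one, hq.2]
  have hbdd : BddAbove T := ⟨1, hT1⟩
  refine ⟨sSup T, ⟨le_csSup hbdd (mem_insert 0 _), csSup_le ⟨0, mem_insert 0 _⟩ hT1⟩,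
    fun p hp => ⟨fun hlt => ?_, fun hlt hpS => ?_⟩⟩
  · obtain ⟨q, hq, hpq⟩ := exists_lt_of_lt_csSup ⟨0, mem_insert 0 _⟩ hlt
    rcases hq with rfl | ⟨hqS, -⟩
    · exact absurd hp.1 (not_le.2 hpq)
    · exact hS hpq.le hqS
  · exact (le_csSup hbdd (mem_insert_of_mem 0 ⟨hpS, hp⟩)).not_gt hlt

section ZeroOne

open ProbabilityTheory

variable {d : ℕ}

/-- The σ-algebra generated by the events `{U ≤ a}`, `a ∈ [0, 1]`: these are the only events
on which `IsUniformProduct` pins down the law of an edge variable. -/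
abbrev unitLevels : MeasurableSpace ℝ :=
  MeasurableSpace.generateFrom (Iic '' Icc 0 1)

abbrev edgeSigma (e : {e : Sym2 (V d) // IsEdge e}) : MeasurableSpace (UConfig d) :=
  unitLevels.comap fun u => u e

lemma edgeSigma_le (e : {e : Sym2 (V d) // IsEdge e}) : edgeSigma e ≤ MeasurableSpace.pi :=
  le_trans (MeasurableSpace.comap_mono (MeasurableSpace.generateFrom_le
      (by rintro _ ⟨a, -, rfl⟩; exact measurableSet_Iic)))
    (measurable_pi_apply _).comap_le

lemma IsUniformProduct.measure_forall_le {P : Measure (UConfig d)} (hP : IsUniformProduct P)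
    (t : Finset {e : Sym2 (V d) // IsEdge e}) (a : {e : Sym2 (V d) // IsEdge e} → ℝ)
    (ha : ∀ e ∈ t, a e ∈ Icc 0 1) :
    P {u | ∀ e ∈ t, u e ≤ a e} = ∏ e ∈ t, ENNReal.ofReal (a e) := by
  have h := hP (t.map (Function.Embedding.subtype _))
    (Finset.forall_mem_map.2 fun e _ => e.2) (Function.extend Subtype.val a 0)
    (Finset.forall_mem_map.2 fun e he => by
      simpa [Subtype.val_injective.extend_apply] using ha e he)
  simpa only [Finset.forall_mem_map, Finset.prod_map, Function.Embedding.coe_subtype,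
    Subtype.val_injective.extend_apply] using h

lemma IsUniformProduct.iIndep {P : Measure (UConfig d)} [IsProbabilityMeasure P]
    (hP : IsUniformProduct P) : iIndep (edgeSigma (d := d)) P := by
  refine iIndepSets.iIndep edgeSigma_le
    (fun e => {s | ∃ t ∈ Iic '' Icc 0 1, (fun u : UConfig d => u e) ⁻¹' t = s})
    (fun e => (isPiSystem_image_Iic _).comap _) (fun e => MeasurableSpace.comap_generateFrom) ?_
  rw [iIndepSets_iff]
  intro t f hf
  have hlevel : ∀ e ∈ t, ∃ a ∈ Icc (0 : ℝ) 1, f e = {u | u e ≤ a} := by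
    intro e he
    obtain ⟨_, ⟨a, ha, rfl⟩, hfe⟩ := hf e he
    exact ⟨a, ha, hfe.symm⟩
  choose! a ha hfa using hlevel
  have hinter : ⋂ e ∈ t, f e = {u | ∀ e ∈ t, u e ≤ a e} := by
    ext u
    simp +contextual [hfa]
  rw [hinter, hP.measure_forall_le t a ha]
  refine Finset.prod_congr rfl fun e he => ?_
  simpa [hfa e he] using (hP.measure_forall_le {e} a (by simpa using ha e he)).symm

lemma measurableSet_limsup_XhasInfU {p : ℝ} (hp : p ∈ Icc (0 : ℝ) 1) :
    MeasurableSet[limsup (edgeSigma (d := d)) cofinite] {u | XhasInfU u p} := by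
  rw [limsup_eq_iInf_iSup]
  simp only [MeasurableSpace.measurableSet_iInf]
  intro t ht
  rw [show ⨆ e ∈ t, edgeSigma e = ⨆ e ∈ Subtype.val '' t, unitLevels.comap fun u => u e from
    (iSup_image (g := fun e => unitLevels.comap fun u : UConfig d => u e)).symm]
  refine measurableSet_biSup_comap_of_eqOn _ _ (measurableSet_XhasInfU fun e =>
    le_iSup (fun e => unitLevels.comap fun u : UConfig d => u e) e _
      ⟨Iic p, MeasurableSpace.measurableSet_generateFrom (mem_image_of_mem _ hp), rfl⟩) ?_
  intro u v huv
  refine XhasInfU.of_finite_ne (((mem_cofinite.1 ht).image Subtype.val).subset ?_)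
  rintro e ⟨he, hne⟩
  exact ⟨⟨e, he⟩, fun het => hne (huv ⟨⟨e, he⟩, het, rfl⟩), rfl⟩

lemma measure_setOf_XhasInfU_eq_zero_or_one {P : Measure (UConfig d)} [IsProbabilityMeasure P]
    (hP : IsUniformProduct P) {p : ℝ} (hp : p ∈ Icc (0 : ℝ) 1) :
    P {u | XhasInfU u p} = 0 ∨ P {u | XhasInfU u p} = 1 :=
  measure_zero_or_one_of_measurableSet_limsup edgeSigma_le hP.iIndep
    (p := Set.Finite) (ns := fun t : Finset _ => (t : Set _))
    (fun _ ht => ht.compl_mem_cofinite) (fun s t => ⟨s ∪ t, by simp, by simp⟩)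
    (fun t => t.finite_toSet) (fun e => ⟨{e}, by simp⟩) (measurableSet_limsup_XhasInfU hp)

end ZeroOne

theorem XhasInf_zero_one_law_general (d : ℕ)
    (P : Measure (UConfig d)) [IsProbabilityMeasure P]
    (hP : IsUniformProduct P) :
    (∀ p ∈ Set.Icc (0 : ℝ) 1,
        P {u | XhasInfU u p} = 0 ∨ P {u | XhasInfU u p} = 1) ∧
    (∀ p q : ℝ, p ≤ q → P {u | XhasInfU u q} ≤ P {u | XhasInfU u p}) ∧
    ∃ pf ∈ Set.Icc (0 : ℝ) 1, ∀ p ∈ Set.Icc (0 : ℝ) 1,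
      (p < pf → P {u | XhasInfU u p} = 1) ∧ (pf < p → P {u | XhasInfU u p} = 0) := by
  have h01 : ∀ p ∈ Icc (0 : ℝ) 1, P {u | XhasInfU u p} = 0 ∨ P {u | XhasInfU u p} = 1 :=
    fun p hp => measure_setOf_XhasInfU_eq_zero_or_one hP hp
  have hanti : ∀ p q : ℝ, p ≤ q → P {u | XhasInfU u q} ≤ P {u | XhasInfU u p} :=
    fun p q hpq => measure_mono fun u hu => XhasInfU.anti hpq hu
  have hlower : IsLowerSet {p : ℝ | P {u | XhasInfU u p} = 1} :=
    fun q p hpq hq => le_antisymm prob_le_one (hq ▸ hanti p q hpq)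
  obtain ⟨pf, hpf, hthreshold⟩ := hlower.exists_threshold_Icc
  exact ⟨h01, hanti, pf, hpf, fun p hp =>
    ⟨(hthreshold p hp).1, fun hlt => (h01 p hp).resolve_right ((hthreshold p hp).2 hlt)⟩⟩

/-- The event that the union `X` of finite open clusters has an infinite
component is trivial (probability `0` or `1`), its probability is
non-increasing in `p`, and hence there is a critical value `p_fin ∈ [0,1]`
with probability `1` below it and `0` above it. -/
theorem XhasInf_zero_one_law (d : ℕ) (hd : 2 ≤ d)
    (P : Measure (UConfig d)) [IsProbabilityMeasure P]
    (hP : IsUniformProduct P) :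
    (∀ p ∈ Set.Icc (0 : ℝ) 1,
        P {u | XhasInfU u p} = 0 ∨ P {u | XhasInfU u p} = 1) ∧
    (∀ p q : ℝ, p ≤ q → P {u | XhasInfU u q} ≤ P {u | XhasInfU u p}) ∧
    ∃ pf ∈ Set.Icc (0 : ℝ) 1, ∀ p ∈ Set.Icc (0 : ℝ) 1,
      (p < pf → P {u | XhasInfU u p} = 1) ∧ (pf < p → P {u | XhasInfU u p} = 0) :=
  XhasInf_zero_one_law_general d P hP
end
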